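/- Let n, k, z ∈ Z_+ with 1 ≤ k ≤ n. Then the set of k-strong parking sequences for (n;z) — sequences c of length k that are strong parking sequences for every composition (n_1,...,n_k) of n into k positive parts — equals the set of strong parking sequences for the single composition y_0 = (1,1,...,1, n-k+1). Consequently, its cardinality is z(z+1)···(z+k-1) if k < n, and z(n+z)^{n-1} if k = n. -/

import Mathlib

open Finset

/-- The first empty spot `j` with `c ≤ j ≤ M` (street spots are `1..M`). -/
def firstEmpty (occ : Finset ℕ) (M c : ℕ) : Option ℕ :=
  (List.range' c (M + 1 - c)).find? (fun j => decide (j ∉ occ))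

/-- Park cars with preferences `cs` and lengths `ys` on a street with spots `1..M`,
where `occ` is the set of already-occupied spots.  Returns the list of starting
spots of the cars (in order of entry) if all cars can park. -/
def parkAux (M : ℕ) : Finset ℕ → List ℕ → List ℕ → Option (List ℕ)
  | _, [], [] => some []
  | occ, c :: cs, y :: ys =>
    match firstEmpty occ M c with
    | none => none
    | some j =>
      if (∀ i ∈ Finset.Ico j (j + y), i ∉ occ) ∧ j + y - 1 ≤ M then
        (parkAux M (occ ∪ Finset.Ico j (j + y)) cs ys).map (j :: ·)
      else none
  | _, _, _ => none

/-- Outcome of the parking process for length vector `ys`, preference sequence `cs`,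
and trailer parameter `z` (the trailer occupies spots `1,…,z-1`); the street has
`z - 1 + ys.sum` spots. -/
def parkResult (ys cs : List ℕ) (z : ℕ) : Option (List ℕ) :=
  parkAux (z - 1 + ys.sum) (Finset.Ico 1 z) cs ys

/-- `cs` is a parking sequence for `(ys; z)`. -/
def IsParkingSeq (ys cs : List ℕ) (z : ℕ) : Prop :=
  cs.length = ys.length ∧ (∀ c ∈ cs, 1 ≤ c) ∧ (parkResult ys cs z).isSome = true

/-- Starting spots of the standard (no-gap, in order) final configuration. -/
def standardStarts (z : ℕ) : List ℕ → List ℕ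
  | [] => []
  | y :: ys => z :: standardStarts (z + y) ys

/-- `cs` parks `ys` in the standard order `T, C₁, …, Cₙ`. -/
def ParksStandard (ys cs : List ℕ) (z : ℕ) : Prop :=
  parkResult ys cs z = some (standardStarts z ys)

/-- `cs` is a permutation-invariant parking sequence for `(ys; z)`. -/
def PermInvariant (ys cs : List ℕ) (z : ℕ) : Prop :=
  ∀ cs' : List ℕ, cs'.Perm cs → IsParkingSeq ys cs' z

/-- `cs` is a strong parking sequence for `{ys; z}`. -/
def StrongParkingSeq (ys cs : List ℕ) (z : ℕ) : Prop :=
  ∀ ys' : List ℕ, ys'.Perm ys → IsParkingSeq ys' cs z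

/-- The nondecreasing rearrangement (order statistics) of a list. -/
def orderStats (l : List ℕ) : List ℕ :=
  Multiset.sort (l : Multiset ℕ) (· ≤ ·)

/-- `xs` is a `u`-parking function. -/
def IsUPF (u xs : List ℕ) : Prop :=
  xs.length = u.length ∧ (∀ x ∈ xs, 1 ≤ x) ∧
    ∀ i < u.length, (orderStats xs).getD i 0 ≤ u.getD i 0

/-!
If `c i ≤ z + i` for every (0-indexed) position `i`, car `i` finds the spot just after the previous
cars free, so the cars park in order with no gaps whatever their lengths: such a `c` is a strong
parking sequence for every composition. Conversely, let `k < n` and take `y₀`: `k - 1` unit cars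
and one car of length `n - k + 1 ≥ 2`. Let `i` be the first position with `c i > z + i`, and
put unit cars in positions `0, …, i`. Car `i` then parks at `c i` and leaves the spot before it
empty. The long car can never start on that spot, and a unit car always takes the spot where
the long car would have started, so the spot stays empty and some rearrangement of `y₀` fails.
Hence for `k < n` both sets equal the staircase `{c | 1 ≤ c i ≤ z + i}`.

For `k = n` the only composition is all ones, and Pollak's circular argument gives the count.
For any preference function on `ℤ/(n + z)`, exactly `z` of its `n + z` rotations satisfy the
parking condition. These rotations are the strict records, in the second period, of the walk
"number of cars preferring `≤ t`, minus `t`".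
-/

lemma firstEmpty_eq_some_iff {occ : Finset ℕ} {M c j : ℕ} :
    firstEmpty occ M c = some j ↔
      c ≤ j ∧ j ≤ M ∧ j ∉ occ ∧ ∀ x, c ≤ x → x < j → x ∈ occ := by
  simp only [firstEmpty, List.find?_eq_some_iff_getElem, List.length_range',
    List.getElem_range', one_mul, decide_eq_true_eq, Bool.not_eq_eq_eq_not, Bool.not_true,
    decide_eq_false_iff_not, not_not]
  constructor
  · rintro ⟨hj, i, hi, rfl, hbefore⟩
    refine ⟨by omega, by omega, hj, fun x hcx hxj => ?_⟩
    obtain ⟨d, rfl⟩ := Nat.exists_eq_add_of_le hcx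
    exact hbefore d (by omega)
  · rintro ⟨hcj, hjM, hj, hbefore⟩
    exact ⟨hj, j - c, by omega, by omega, fun i hi => hbefore _ (by omega) (by omega)⟩

lemma exists_firstEmpty_eq_some {occ : Finset ℕ} {M c x : ℕ} (hcx : c ≤ x) (hxM : x ≤ M)
    (hx : x ∉ occ) : ∃ j, firstEmpty occ M c = some j := by
  rw [← Option.isSome_iff_exists, firstEmpty, List.find?_isSome]
  exact ⟨x, List.mem_range'_1.2 ⟨hcx, by omega⟩, by simpa using hx⟩

lemma parkAux_cons_isSome_iff {M : ℕ} {occ : Finset ℕ} {c y : ℕ} {cs ys : List ℕ} :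
    (parkAux M occ (c :: cs) (y :: ys)).isSome ↔
      ∃ j, firstEmpty occ M c = some j ∧ (∀ i ∈ Ico j (j + y), i ∉ occ) ∧ j + y - 1 ≤ M ∧
        (parkAux M (occ ∪ Ico j (j + y)) cs ys).isSome := by
  rw [parkAux]
  cases firstEmpty occ M c with
  | none => simp
  | some j =>
    simp only [Option.some.injEq, exists_eq_left']
    split_ifs with h
    · simp only [Option.isSome_map, h.2, true_and]
      exact (and_iff_right h.1).symm
    · simp only [Option.isSome_none, Bool.false_eq_true, false_iff]
      exact fun h' => h ⟨h'.1, h'.2.1⟩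

lemma parkAux_cons_one_isSome_iff {M : ℕ} {occ : Finset ℕ} {c : ℕ} {cs ys : List ℕ} :
    (parkAux M occ (c :: cs) (1 :: ys)).isSome ↔
      ∃ j, firstEmpty occ M c = some j ∧ (parkAux M (insert j occ) cs ys).isSome := by
  simp only [parkAux_cons_isSome_iff, Nat.Ico_succ_singleton, Finset.union_singleton]
  refine exists_congr fun j => ⟨fun ⟨hj, _, _, h⟩ => ⟨hj, h⟩, fun ⟨hj, h⟩ => ?_⟩
  obtain ⟨-, hjM, hjocc, -⟩ := firstEmpty_eq_some_iff.1 hj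
  exact ⟨hj, by simpa using hjocc, by omega, h⟩

/-- Positions are 0-indexed: for 1-indexed `i` this reads `1 ≤ c_i ≤ z + i - 1`. -/
def BelowStaircase (z : ℕ) (cs : List ℕ) : Prop :=
  ∀ (p : ℕ) (hp : p < cs.length), 1 ≤ cs[p] ∧ cs[p] ≤ z + p

lemma belowStaircase_nil (z : ℕ) : BelowStaircase z [] := fun _ hp => absurd hp (by simp)

lemma belowStaircase_cons_iff {z c : ℕ} {cs : List ℕ} :
    BelowStaircase z (c :: cs) ↔ 1 ≤ c ∧ c ≤ z ∧ BelowStaircase (z + 1) cs := by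
  constructor
  · intro h
    refine ⟨(h 0 (by simp)).1, (h 0 (by simp)).2, fun p hp => ?_⟩
    have := h (p + 1) (Nat.succ_lt_succ hp)
    simp only [List.getElem_cons_succ] at this
    omega
  · rintro ⟨hc1, hcz, h⟩ (_ | p) hp
    · exact ⟨hc1, hcz⟩
    · have := h p (Nat.lt_of_succ_lt_succ hp)
      simp only [List.getElem_cons_succ]
      omega

lemma BelowStaircase.mono {z z' : ℕ} {cs : List ℕ} (h : BelowStaircase z cs) (hz : z ≤ z') :
    BelowStaircase z' cs := fun p hp => ⟨(h p hp).1, by have := (h p hp).2; omega⟩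

lemma BelowStaircase.one_le {z : ℕ} {cs : List ℕ} (h : BelowStaircase z cs) :
    ∀ c ∈ cs, 1 ≤ c := by
  intro c hc
  obtain ⟨p, hp, rfl⟩ := List.getElem_of_mem hc
  exact (h p hp).1

lemma parkAux_Ico_eq_standardStarts {ys cs : List ℕ} {b M : ℕ} (hb : 1 ≤ b)
    (hM : b + ys.sum = M + 1) (hlen : cs.length = ys.length) (hys : ∀ y ∈ ys, 1 ≤ y)
    (hcs : BelowStaircase b cs) :
    parkAux M (Ico 1 b) cs ys = some (standardStarts b ys) := by
  induction ys generalizing cs b with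
  | nil => simp_all [parkAux, standardStarts]
  | cons y ys ih =>
    obtain _ | ⟨c, cs⟩ := cs
    · simp at hlen
    obtain ⟨hc1, hcb, hcs⟩ := belowStaircase_cons_iff.1 hcs
    simp only [List.sum_cons, List.length_cons, List.mem_cons, forall_eq_or_imp] at hM hlen hys
    have hfirst : firstEmpty (Ico 1 b) M c = some b :=
      firstEmpty_eq_some_iff.2 ⟨hcb, by omega, by simp, fun x _ _ => by simp; omega⟩
    have hfree : (∀ i ∈ Ico b (b + y), i ∉ Ico 1 b) ∧ b + y - 1 ≤ M :=
      ⟨fun i hi => by simp at hi ⊢; omega, by omega⟩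
    rw [parkAux, hfirst]
    dsimp only
    rw [if_pos hfree, Ico_union_Ico_eq_Ico hb (by omega),
      ih (by omega) (by omega) (by omega) hys.2 (hcs.mono (by omega))]
    rfl

lemma parksStandard_of_belowStaircase {ys cs : List ℕ} {z : ℕ} (hz : 1 ≤ z)
    (hlen : cs.length = ys.length) (hys : ∀ y ∈ ys, 1 ≤ y) (hcs : BelowStaircase z cs) :
    ParksStandard ys cs z :=
  parkAux_Ico_eq_standardStarts hz (by omega) hlen hys hcs

lemma strongParkingSeq_of_belowStaircase {ys cs : List ℕ} {z : ℕ} (hz : 1 ≤ z)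
    (hlen : cs.length = ys.length) (hys : ∀ y ∈ ys, 1 ≤ y) (hcs : BelowStaircase z cs) :
    StrongParkingSeq ys cs z := fun ys' hperm =>
  have hlen' : cs.length = ys'.length := hlen.trans hperm.length_eq.symm
  ⟨hlen', hcs.one_le, by
    rw [parksStandard_of_belowStaircase hz hlen' (fun y hy => hys y (hperm.subset hy)) hcs]
    rfl⟩

lemma card_Icc_sdiff_insert {occ : Finset ℕ} {j : ℕ} (hj : 1 ≤ j) (hjocc : j ∉ occ) (t : ℕ) :
    #(Icc 1 t \ insert j occ) + (if j ≤ t then 1 else 0) = #(Icc 1 t \ occ) := by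
  rw [sdiff_insert]
  split_ifs with hjt
  · exact card_erase_add_one (by simp [*])
  · rw [erase_eq_of_notMem (by simp [hjt]), add_zero]

def ParksLongCarAnywhere (M m : ℕ) (occ : Finset ℕ) (cs : List ℕ) : Prop :=
  ∀ p q, p + q + 1 = cs.length →
    (parkAux M occ cs (List.replicate p 1 ++ m :: List.replicate q 1)).isSome

section ParksLongCarAnywhere

variable {M m : ℕ} {occ : Finset ℕ} {c : ℕ} {cs : List ℕ}

lemma ParksLongCarAnywhere.exists_firstEmpty (h : ParksLongCarAnywhere M m occ (c :: cs))
    (hm : 2 ≤ m) :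
    ∃ j, firstEmpty occ M c = some j ∧ j + 1 ∉ occ ∧ j + m ≤ M + 1 := by
  obtain ⟨j, hj, hfree, hfit, -⟩ := parkAux_cons_isSome_iff.1 (by simpa using h 0 cs.length)
  exact ⟨j, hj, hfree _ (by simp; omega), by omega⟩

lemma ParksLongCarAnywhere.tail {j : ℕ} (h : ParksLongCarAnywhere M m occ (c :: cs))
    (hj : firstEmpty occ M c = some j) : ParksLongCarAnywhere M m (insert j occ) cs := by
  intro p q hpq
  have hpark := h (p + 1) q (by simp; omega)
  rw [List.replicate_succ, List.cons_append] at hpark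
  obtain ⟨j', hj', hrest⟩ := parkAux_cons_one_isSome_iff.1 hpark
  obtain rfl : j = j' := Option.some_inj.1 (hj.symm.trans hj')
  exact hrest

/-- A long car never starts at `e` because `e + 1` is taken, and a unit car takes the spot where
the long car would have started; so `e` stays empty until the end, which is one spot too many. -/
lemma not_parksLongCarAnywhere_of_gap {e : ℕ} (hm : 2 ≤ m) (hocc : occ ⊆ Icc 1 (M + 1 - m))
    (he : 1 ≤ e) (he_free : e ∉ occ) (he_succ : e + 1 ∈ occ)
    (hcard : #(Icc 1 M \ occ) + 1 = cs.length + m) (hcs : ∀ c ∈ cs, 1 ≤ c) :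
    ¬ ParksLongCarAnywhere M m occ cs := by
  induction cs generalizing occ with
  | nil =>
    have hsub : occ ⊆ (Icc 1 (M + 1 - m)).erase e :=
      fun x hx => mem_erase.2 ⟨ne_of_mem_of_not_mem hx he_free, hocc hx⟩
    have he_succ_le : e + 1 ≤ M + 1 - m := (mem_Icc.1 (hocc he_succ)).2
    have hocc_card := card_le_card hsub
    rw [card_erase_of_mem (by simp; omega), Nat.card_Icc] at hocc_card
    rw [card_sdiff_of_subset (hocc.trans (Icc_subset_Icc_right (by omega))), Nat.card_Icc]
      at hcard
    simp only [List.length_nil, zero_add] at hcard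
    exact absurd hcard (by omega)
  | cons c cs ih =>
    intro h
    obtain ⟨j, hj, hj_succ, hjm⟩ := h.exists_firstEmpty hm
    obtain ⟨hcj, hjM, hjocc, -⟩ := firstEmpty_eq_some_iff.1 hj
    have hj1 : 1 ≤ j := (hcs c (by simp)).trans hcj
    have hej : e ≠ j := by rintro rfl; exact hj_succ he_succ
    refine ih (insert_subset (by simp; omega) hocc) (by simp [hej, he_free])
      (mem_insert_of_mem he_succ) ?_ (fun c hc => hcs c (by simp [hc])) (h.tail hj)
    have := card_Icc_sdiff_insert hj1 hjocc M
    simp only [hjM, if_true, List.length_cons] at this hcard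
    omega

lemma belowStaircase_of_parksLongCarAnywhere {b : ℕ} (hm : 2 ≤ m) (hb : 1 ≤ b)
    (hM : b + cs.length + m = M + 2) (hcs : ∀ c ∈ cs, 1 ≤ c)
    (h : ParksLongCarAnywhere M m (Ico 1 b) cs) : BelowStaircase b cs := by
  induction cs generalizing b with
  | nil => exact belowStaircase_nil b
  | cons c cs ih =>
    obtain ⟨j, hj, -, hjm⟩ := h.exists_firstEmpty hm
    obtain ⟨hcj, hjM, hjocc, hbefore⟩ := firstEmpty_eq_some_iff.1 hj
    have hc1 : 1 ≤ c := hcs c (by simp)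
    simp only [List.length_cons] at hM
    have hcb : c ≤ b := by
      by_contra! hbc
      obtain rfl : j = c := le_antisymm (by
        by_contra! hcj'
        have := hbefore c le_rfl hcj'
        simp at this
        omega) hcj
      refine not_parksLongCarAnywhere_of_gap (e := j - 1) hm ?_ (by omega) (by simp; omega)
        (by simp [show j - 1 + 1 = j by omega]) ?_ (fun c hc => hcs c (by simp [hc])) (h.tail hj)
      · exact insert_subset (by simp; omega) fun x hx => by simp at hx ⊢; omega
      · have := card_Icc_sdiff_insert hc1 hjocc M
        rw [card_sdiff_of_subset (Ico_subset_Icc_self.trans (Icc_subset_Icc_right (by omega))),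
          Nat.card_Icc, Nat.card_Ico] at this
        simp only [hjM, if_true] at this
        omega
    obtain rfl : j = b := le_antisymm
      (by by_contra! hbj; simpa using hbefore b hcb hbj) (by by_contra! hjb; simp at hjocc; omega)
    refine belowStaircase_cons_iff.2 ⟨hc1, hcb, ih (by omega) (by omega)
      (fun c hc => hcs c (by simp [hc])) ?_⟩
    simpa [Finset.insert_Ico_right_eq_Ico_add_one hb] using h.tail hj

end ParksLongCarAnywhere

lemma parksLongCarAnywhere_of_strongParkingSeq {k m z : ℕ} {cs : List ℕ}
    (h : StrongParkingSeq (List.replicate k 1 ++ [m]) cs z) :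
    ParksLongCarAnywhere (z - 1 + (k + m)) m (Ico 1 z) cs := by
  intro p q hpq
  have hlen : cs.length = k + 1 := by simpa using (h _ (List.Perm.refl _)).1
  have hperm : (List.replicate p 1 ++ m :: List.replicate q 1).Perm (List.replicate k 1 ++ [m]) :=
    List.perm_middle.trans <| by
      rw [← List.replicate_add, show p + q = k by omega]
      exact (List.perm_append_singleton _ _).symm
  have hpark := (h _ hperm).2.2
  rwa [parkResult, hperm.sum_eq, List.sum_append, List.sum_replicate, smul_eq_mul, mul_one,
    List.sum_singleton] at hpark

lemma strongParkingSeq_iff_belowStaircase {k m z : ℕ} {cs : List ℕ} (hm : 2 ≤ m) (hz : 1 ≤ z) :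
    StrongParkingSeq (List.replicate k 1 ++ [m]) cs z ↔
      cs.length = k + 1 ∧ BelowStaircase z cs := by
  constructor
  · intro h
    obtain ⟨hlen, hcs, -⟩ := h _ (List.Perm.refl _)
    simp only [List.length_append, List.length_replicate, List.length_singleton] at hlen
    exact ⟨hlen, belowStaircase_of_parksLongCarAnywhere hm hz (by omega) hcs
      (parksLongCarAnywhere_of_strongParkingSeq h)⟩
  · rintro ⟨hlen, hcs⟩
    refine strongParkingSeq_of_belowStaircase hz (by simpa using hlen) ?_ hcs
    simp only [List.mem_append, List.mem_replicate, List.mem_singleton]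
    omega

lemma ncard_belowStaircase (k z : ℕ) :
    {cs : List ℕ | cs.length = k ∧ BelowStaircase z cs}.ncard = ∏ i ∈ range k, (z + i) := by
  have himage : {cs : List ℕ | cs.length = k ∧ BelowStaircase z cs} =
      List.ofFn '' (Fintype.piFinset fun i : Fin k => Icc 1 (z + i) : Set (Fin k → ℕ)) := by
    ext cs
    simp only [Set.mem_ofPred_eq, Set.mem_image, mem_coe, Fintype.mem_piFinset, mem_Icc]
    constructor
    · rintro ⟨rfl, hcs⟩
      exact ⟨fun i => cs[i], fun i => hcs i i.isLt, List.ofFn_getElem⟩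
    · rintro ⟨f, hf, rfl⟩
      exact ⟨List.length_ofFn, fun p hp => by simpa using hf ⟨p, by simpa using hp⟩⟩
  rw [himage, Set.ncard_image_of_injective _ List.ofFn_injective, Set.ncard_coe_finset,
    Fintype.card_piFinset, ← Fin.prod_univ_eq_prod_range]
  simp

def PrefixCountCondition (M : ℕ) (occ : Finset ℕ) (cs : List ℕ) : Prop :=
  ∀ t ≤ M, #(Icc 1 t \ occ) ≤ cs.countP (· ≤ t)

section PrefixCountCondition

variable {M : ℕ} {occ : Finset ℕ} {c : ℕ} {cs : List ℕ}

lemma Icc_sdiff_subset_of_forall_mem {t : ℕ} (h : ∀ x, c ≤ x → x ≤ t → x ∈ occ) :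
    Icc 1 t \ occ ⊆ Icc 1 (c - 1) \ occ := by
  intro x hx
  simp only [mem_sdiff, mem_Icc] at hx ⊢
  exact ⟨⟨hx.1.1, by by_contra! hcx; exact hx.2 (h x (by omega) hx.1.2)⟩, hx.2⟩

lemma PrefixCountCondition.exists_firstEmpty (h : PrefixCountCondition M occ (c :: cs))
    (hcard : #(Icc 1 M \ occ) = cs.length + 1) (hc : 1 ≤ c) :
    ∃ j, firstEmpty occ M c = some j := by
  have hcs_le (t : ℕ) : cs.countP (· ≤ t) ≤ cs.length := List.countP_le_length
  have hcM : c ≤ M := by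
    by_contra! hMc
    have := h M le_rfl
    simp only [List.countP_cons, decide_eq_true_eq, if_neg hMc.not_ge] at this
    have := hcs_le M
    omega
  by_contra! hnone
  have hfull : ∀ x, c ≤ x → x ≤ M → x ∈ occ := fun x hcx hxM => by
    by_contra hx
    obtain ⟨j, hj⟩ := exists_firstEmpty_eq_some hcx hxM hx
    exact hnone j hj
  have := card_le_card (Icc_sdiff_subset_of_forall_mem hfull)
  have := h (c - 1) (by omega)
  simp only [List.countP_cons, decide_eq_true_eq, if_neg (show ¬c ≤ c - 1 by omega)] at this
  have := hcs_le (c - 1)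
  omega

lemma prefixCountCondition_insert_iff {j : ℕ} (hj : firstEmpty occ M c = some j) (hc : 1 ≤ c) :
    PrefixCountCondition M (insert j occ) cs ↔ PrefixCountCondition M occ (c :: cs) := by
  obtain ⟨hcj, -, hjocc, hbefore⟩ := firstEmpty_eq_some_iff.1 hj
  have hinsert := card_Icc_sdiff_insert (hc.trans hcj) hjocc
  simp only [PrefixCountCondition, List.countP_cons, decide_eq_true_eq]
  constructor
  · intro h t ht
    have := hinsert t
    have := h t ht
    split_ifs at * <;> omega
  · intro h t ht
    have := hinsert t
    by_cases hjt : j ≤ t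
    · have := h t ht
      split_ifs at * <;> omega
    by_cases hct : c ≤ t
    · have := card_le_card (Icc_sdiff_subset_of_forall_mem (t := t)
        fun x hcx hxt => hbefore x hcx (by omega))
      have := h (c - 1) (by omega)
      have : cs.countP (· ≤ c - 1) ≤ cs.countP (· ≤ t) :=
        List.countP_mono_left fun x _ hx => by simp at hx ⊢; omega
      split_ifs at * <;> omega
    · have := h t ht
      simp only [if_neg hjt, if_neg hct] at *
      omega

lemma parkAux_replicate_one_isSome_iff (hcs : ∀ c ∈ cs, 1 ≤ c)
    (hcard : #(Icc 1 M \ occ) = cs.length) :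
    (parkAux M occ cs (List.replicate cs.length 1)).isSome ↔ PrefixCountCondition M occ cs := by
  induction cs generalizing occ with
  | nil =>
    simp only [List.length_nil, List.replicate_zero, parkAux, Option.isSome_some, true_iff]
    exact fun t ht => (card_le_card (sdiff_subset_sdiff (Icc_subset_Icc_right ht) le_rfl)).trans
      hcard.le
  | cons c cs ih =>
    have hc : 1 ≤ c := hcs c (by simp)
    have hcs' : ∀ c ∈ cs, 1 ≤ c := fun c hc => hcs c (by simp [hc])
    have hcard' {j : ℕ} (hj : firstEmpty occ M c = some j) :
        #(Icc 1 M \ insert j occ) = cs.length := by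
      obtain ⟨hcj, hjM, hjocc, -⟩ := firstEmpty_eq_some_iff.1 hj
      have := card_Icc_sdiff_insert (hc.trans hcj) hjocc M
      simp only [hjM, if_true, List.length_cons] at this hcard
      omega
    simp only [List.length_cons, List.replicate_succ, parkAux_cons_one_isSome_iff]
    constructor
    · rintro ⟨j, hj, h⟩
      exact (prefixCountCondition_insert_iff hj hc).1 ((ih hcs' (hcard' hj)).1 h)
    · intro h
      obtain ⟨j, hj⟩ := h.exists_firstEmpty hcard hc
      exact ⟨j, hj, (ih hcs' (hcard' hj)).2 ((prefixCountCondition_insert_iff hj hc).2 h)⟩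

end PrefixCountCondition

lemma isParkingSeq_replicate_one_iff {n z : ℕ} {cs : List ℕ} (hz : 1 ≤ z) :
    IsParkingSeq (List.replicate n 1) cs z ↔
      cs.length = n ∧ (∀ c ∈ cs, 1 ≤ c) ∧ ∀ t ≤ z - 1 + n, t + 1 ≤ z + cs.countP (· ≤ t) := by
  have hfree (t : ℕ) : #(Icc 1 t \ Ico 1 z) = t + 1 - z := by
    rw [show Icc 1 t \ Ico 1 z = Icc z t by ext; simp; omega, Nat.card_Icc]
  simp only [IsParkingSeq, parkResult, List.length_replicate, List.sum_replicate, smul_eq_mul,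
    mul_one]
  constructor
  · rintro ⟨rfl, hcs, h⟩
    refine ⟨rfl, hcs, fun t ht => ?_⟩
    have := (parkAux_replicate_one_isSome_iff hcs (by rw [hfree]; omega)).1 h t ht
    rw [hfree] at this
    omega
  · rintro ⟨rfl, hcs, h⟩
    refine ⟨rfl, hcs, (parkAux_replicate_one_isSome_iff hcs (by rw [hfree]; omega)).2
      fun t ht => ?_⟩
    have := h t ht
    rw [hfree]
    omega

/-- The records are the first visits to the `z` levels just below the minimum over the first
period. -/
theorem card_strictRecords {W : ℕ → ℤ} {N z : ℕ} (hN : 0 < N)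
    (hstep : ∀ t, W t - 1 ≤ W (t + 1)) (hper : ∀ t, W (t + N) = W t - z) :
    #{σ ∈ range N | ∀ j < σ + N, W (σ + N) < W j} = z := by
  obtain ⟨j₀, hj₀, hmin⟩ := exists_min_image (range N) W (nonempty_range_iff.2 hN.ne')
  simp only [mem_range] at hj₀ hmin
  set m := W j₀
  have hcard : #(Icc (m - z) (m - 1)) = z := by simp
  rw [← hcard]
  refine card_bij (fun σ _ => W (σ + N)) (fun σ hσ => ?_) (fun σ₁ hσ₁ σ₂ hσ₂ heq => ?_)
    (fun v hv => ?_)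
  · simp only [mem_filter, mem_range] at hσ
    have := hmin σ hσ.1
    have := hσ.2 j₀ (by omega)
    have := hper σ
    simp only [mem_Icc]
    omega
  · simp only [mem_filter, mem_range] at hσ₁ hσ₂
    by_contra hne
    rcases Nat.lt_or_gt_of_ne hne with h | h
    · exact (hσ₂.2 (σ₁ + N) (by omega)).ne heq.symm
    · exact (hσ₁.2 (σ₂ + N) (by omega)).ne heq
  · simp only [mem_Icc] at hv
    have hex : ∃ t, W t ≤ v := ⟨j₀ + N, by rw [hper]; omega⟩
    obtain ⟨τ, hτ, hbefore, hτ_le⟩ : ∃ τ, W τ ≤ v ∧ (∀ j < τ, v < W j) ∧ τ ≤ j₀ + N :=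
      ⟨Nat.find hex, Nat.find_spec hex, fun j hj => lt_of_not_ge (Nat.find_min hex hj),
        Nat.find_min' hex (by rw [hper]; omega)⟩
    have hNτ : N ≤ τ := by
      by_contra! h
      have := hmin τ h
      omega
    have hWτ : W τ = v := by
      obtain ⟨t, rfl⟩ : ∃ t, τ = t + 1 := ⟨τ - 1, by omega⟩
      have := hstep t
      have := hbefore t (by omega)
      omega
    refine ⟨τ - N, ?_, by simp only [Nat.sub_add_cancel hNτ, hWτ]⟩
    simp only [mem_filter, mem_range, Nat.sub_add_cancel hNτ, hWτ]
    exact ⟨by omega, hbefore⟩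

section CyclicWalk

variable {n N : ℕ} (a : Fin n → ZMod N)

def hits (x : ℕ) : ℕ := #{i | a i = x}

def walk (t : ℕ) : ℤ := (∑ x ∈ Ioc 0 t, (hits a x : ℤ)) - t

/-- Unit cars with preferences `(f i).val` park on spots `1, …, N - 1` behind a trailer of
length `z - 1`; a car preferring `0` never parks. -/
def ParkingCondition (z : ℕ) (f : Fin n → ZMod N) : Prop :=
  ∀ t, 1 ≤ t → t < N → t + 1 ≤ z + #{i | (f i).val ∈ Icc 1 t}

lemma walk_sub_one_le_walk_succ (t : ℕ) : walk a t - 1 ≤ walk a (t + 1) := by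
  simp only [walk, sum_Ioc_succ_top (Nat.zero_le t)]
  push_cast
  omega

lemma walk_sub_walk (u t : ℕ) :
    walk a (u + t) - walk a u = (∑ x ∈ Ioc u (u + t), (hits a x : ℤ)) - t := by
  simp only [walk, ← sum_Ioc_consecutive _ (Nat.zero_le u) (Nat.le_add_right u t)]
  push_cast
  ring

variable [NeZero N] {z : ℕ}

lemma eq_natCast_iff_add_val_sub_eq {u x : ℕ} (hx : x ∈ Ico u (u + N)) (y : ZMod N) :
    y = x ↔ u + (y - u).val = x := by
  rw [mem_Ico] at hx
  constructor
  · rintro rfl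
    rw [← Nat.cast_sub hx.1, ZMod.val_cast_of_lt (by omega)]
    omega
  · intro h
    rw [← h, Nat.cast_add, ZMod.natCast_zmod_val]
    ring

lemma sum_hits_eq_card {u : ℕ} {S : Finset ℕ} (hS : S ⊆ Ico u (u + N)) :
    ∑ x ∈ S, hits a x = #{i | u + (a i - u).val ∈ S} := by
  rw [← sum_card_fiberwise_eq_card_filter]
  refine sum_congr rfl fun x hx => ?_
  simp only [hits, eq_natCast_iff_add_val_sub_eq (hS hx)]

lemma walk_add_period (hN : N = n + z) (t : ℕ) : walk a (t + N) = walk a t - z := by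
  have hwindow : ∑ x ∈ Ioc t (t + N), hits a x = n := by
    rw [sum_hits_eq_card a (u := t + 1) (fun x hx => by simp at hx ⊢; omega)]
    rw [filter_true_of_mem fun i _ => ?_, card_univ, Fintype.card_fin]
    have := (a i - (t + 1 : ℕ)).val_lt
    rw [mem_Ioc]
    omega
  have := walk_sub_walk a t N
  rw [← Nat.cast_sum, hwindow] at this
  omega

lemma card_vadd_mem_Icc (s : ZMod N) {t : ℕ} (ht : t < N) :
    (#{i | ((s +ᵥ a) i).val ∈ Icc 1 t} : ℤ) = walk a ((-s).val + t) - walk a (-s).val + t := by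
  set σ := (-s).val
  have hσ : (σ : ZMod N) = -s := ZMod.natCast_zmod_val _
  have hcount : #{i | ((s +ᵥ a) i).val ∈ Icc 1 t} = ∑ x ∈ Ioc σ (σ + t), hits a x := by
    rw [sum_hits_eq_card a (u := σ) (fun x hx => by simp at hx ⊢; omega)]
    congr 1
    ext i
    simp only [mem_filter, mem_univ, true_and, mem_Icc, mem_Ioc, hσ, sub_neg_eq_add,
      Pi.vadd_apply, vadd_eq_add, add_comm s]
    omega
  rw [hcount, walk_sub_walk]
  push_cast
  ring

lemma parkingCondition_vadd_iff (hz : 1 ≤ z) (hN : N = n + z) (s : ZMod N) :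
    ParkingCondition z (s +ᵥ a) ↔ ∀ j < (-s).val + N, walk a ((-s).val + N) < walk a j := by
  have hper := walk_add_period a hN
  have hstep : ∀ t, 1 ≤ t → t < N → (t + 1 ≤ z + #{i | ((s +ᵥ a) i).val ∈ Icc 1 t} ↔
      walk a ((-s).val + N) < walk a ((-s).val + t)) := by
    intro t _ ht
    have := card_vadd_mem_Icc a s ht
    have := hper (-s).val
    omega
  have hσ : (-s).val < N := ZMod.val_lt _
  unfold ParkingCondition
  generalize (-s).val = σ at hσ hstep ⊢
  constructor
  · intro h j hj
    by_cases hσj : σ ≤ j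
    · obtain ⟨t, rfl⟩ := Nat.exists_eq_add_of_le hσj
      rcases Nat.eq_zero_or_pos t with rfl | ht
      · have := hper σ
        simp only [add_zero]
        omega
      · exact (hstep t ht (by omega)).1 (h t ht (by omega))
    · -- `j + N` lies in the window `(σ, σ + N)`, and the walk is higher by `z` at `j`
      have := (hstep (j + N - σ) (by omega) (by omega)).1 (h _ (by omega) (by omega))
      rw [show σ + (j + N - σ) = j + N by omega, hper j] at this
      omega
  · intro h t ht1 ht
    exact (hstep t ht1 ht).2 (h _ (by omega))

open scoped Classical in
lemma card_parkingCondition_vadd (hz : 1 ≤ z) (hN : N = n + z) :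
    #{s : ZMod N | ParkingCondition z (s +ᵥ a)} = z := by
  have hper := walk_add_period a hN
  refine Eq.trans ?_ (card_strictRecords (NeZero.pos N) (walk_sub_one_le_walk_succ a) hper)
  refine card_nbij' (fun s => (-s).val) (fun σ => -(σ : ZMod N)) (fun s hs => ?_)
    (fun σ hσ => ?_) (fun s _ => by simp) (fun σ hσ => ?_)
  · simp only [coe_filter, mem_univ, true_and, Set.mem_ofPred_eq, mem_range] at hs ⊢
    exact ⟨ZMod.val_lt _, (parkingCondition_vadd_iff a hz hN s).1 hs⟩
  · simp only [coe_filter, mem_range, Set.mem_ofPred_eq, mem_univ, true_and] at hσ ⊢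
    rw [parkingCondition_vadd_iff a hz hN, neg_neg, ZMod.val_cast_of_lt hσ.1]
    exact hσ.2
  · simp only [coe_filter, mem_range, Set.mem_ofPred_eq] at hσ
    simp [ZMod.val_cast_of_lt hσ.1]

end CyclicWalk

lemma card_filter_mul_card_eq {G X : Type*} [AddGroup G] [Fintype G] [Fintype X]
    [AddAction G X] (P : X → Prop) [DecidablePred P] {z : ℕ}
    (h : ∀ x, #{g : G | P (g +ᵥ x)} = z) :
    #{x | P x} * Fintype.card G = z * Fintype.card X := by
  have htranslate (g : G) : #{x | P (g +ᵥ x)} = #{x | P x} :=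
    card_equiv (AddAction.toPerm g) (by simp)
  calc #{x | P x} * Fintype.card G = ∑ g : G, #{x | P (g +ᵥ x)} := by
        simp [htranslate, mul_comm]
    _ = ∑ x : X, #{g : G | P (g +ᵥ x)} := by simp only [card_filter]; exact sum_comm
    _ = z * Fintype.card X := by simp [h, mul_comm]

open scoped Classical in
theorem card_parkingCondition {n N z : ℕ} [NeZero N] (hn : 1 ≤ n) (hz : 1 ≤ z)
    (hN : N = n + z) : #{f : Fin n → ZMod N | ParkingCondition z f} = z * N ^ (n - 1) := by
  have h := card_filter_mul_card_eq (G := ZMod N) (ParkingCondition z)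
    (card_parkingCondition_vadd · hz hN)
  rw [ZMod.card, Fintype.card_fun, ZMod.card, Fintype.card_fin, ← Nat.sub_add_cancel hn,
    pow_succ, ← mul_assoc, Nat.sub_add_cancel hn] at h
  exact Nat.eq_of_mul_eq_mul_right (NeZero.pos N) h

lemma List.countP_ofFn {α : Type*} {m : ℕ} (p : α → Bool) (f : Fin m → α) :
    (List.ofFn f).countP p = #{i | p (f i)} := by
  induction m with
  | zero => simp
  | succ m ih =>
    rw [List.ofFn_succ, List.countP_cons, ih, Fin.card_filter_univ_succ']
    split_ifs <;> simp [add_comm]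

lemma List.forall_of_length_le_countP {α : Type*} {l : List α} {p : α → Bool}
    (h : l.length ≤ l.countP p) :
    ∀ a ∈ l, p a :=
  List.countP_eq_length.1 (le_antisymm List.countP_le_length h)

lemma List.countP_mem_Icc_one {l : List ℕ} (hl : ∀ c ∈ l, 1 ≤ c) (t : ℕ) :
    l.countP (· ∈ Icc 1 t) = l.countP (· ≤ t) :=
  List.countP_congr fun c hc => by simp [hl c hc]

lemma parkingCondition_iff_countP {n N z : ℕ} (f : Fin n → ZMod N) :
    ParkingCondition z f ↔ ∀ t, 1 ≤ t → t < N →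
      t + 1 ≤ z + (List.ofFn fun i => (f i).val).countP (· ∈ Icc 1 t) := by
  simp [ParkingCondition, List.countP_ofFn]

lemma setOf_isParkingSeq_replicate_one_eq_image {n z : ℕ} (hn : 1 ≤ n) (hz : 1 ≤ z) :
    {cs | IsParkingSeq (List.replicate n 1) cs z} =
      (fun f : Fin n → ZMod (n + z) => List.ofFn fun i => (f i).val) ''
        {f | ParkingCondition z f} := by
  ext cs
  simp only [Set.mem_ofPred_eq, Set.mem_image, isParkingSeq_replicate_one_iff hz]
  constructor
  · rintro ⟨rfl, hpos, hcount⟩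
    have hlt : ∀ c ∈ cs, c < cs.length + z := by
      have := List.forall_of_length_le_countP (l := cs) (p := (· ≤ z - 1 + cs.length))
        (by have := hcount _ le_rfl; omega)
      exact fun c hc => by have := this c hc; simp at this; omega
    have hlist : (List.ofFn fun i : Fin cs.length => ((cs[i] : ZMod (cs.length + z))).val) = cs :=
      by simp [ZMod.val_cast_of_lt (hlt _ (List.getElem_mem _))]
    refine ⟨fun i => (cs[i] : ZMod _), ?_, hlist⟩
    rw [parkingCondition_iff_countP, hlist]
    intro t ht1 ht
    rw [List.countP_mem_Icc_one hpos]
    exact hcount t (by omega)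
  · rintro ⟨f, hf, rfl⟩
    rw [parkingCondition_iff_countP] at hf
    have hall := List.forall_of_length_le_countP (l := List.ofFn fun i => (f i).val)
      (p := (· ∈ Icc 1 (n + z - 1)))
      (by have := hf (n + z - 1) (by omega) (by omega); rw [List.length_ofFn]; omega)
    have hpos : ∀ c ∈ List.ofFn fun i => (f i).val, 1 ≤ c := fun c hc => by
      have := hall c hc
      simp only [decide_eq_true_eq, mem_Icc] at this
      exact this.1
    refine ⟨List.length_ofFn, hpos, fun t ht => ?_⟩
    rcases Nat.eq_zero_or_pos t with rfl | ht1
    · omega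
    · have := hf t ht1 (by omega)
      rwa [List.countP_mem_Icc_one hpos] at this

theorem ncard_isParkingSeq_replicate_one {n z : ℕ} (hn : 1 ≤ n) (hz : 1 ≤ z) :
    {cs | IsParkingSeq (List.replicate n 1) cs z}.ncard = z * (n + z) ^ (n - 1) := by
  classical
  have : NeZero (n + z) := ⟨by omega⟩
  rw [setOf_isParkingSeq_replicate_one_eq_image hn hz, Set.ncard_image_of_injective _
      fun f g h => funext fun i => ZMod.val_injective _ (congrFun (List.ofFn_injective h) i),
    ← card_parkingCondition hn hz rfl, ← Set.ncard_coe_finset, coe_filter_univ]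

lemma eq_replicate_one_of_sum_eq_length {ys : List ℕ} (hpos : ∀ y ∈ ys, 1 ≤ y)
    (hsum : ys.sum = ys.length) : ys = List.replicate ys.length 1 := by
  induction ys with
  | nil => rfl
  | cons y ys ih =>
    simp only [List.mem_cons, forall_eq_or_imp, List.sum_cons, List.length_cons] at hpos hsum
    have := ys.length_le_sum_of_one_le hpos.2
    rw [List.length_cons, List.replicate_succ, ← ih hpos.2 (by omega)]
    congr
    omega

lemma strongParkingSeq_replicate_one_iff {n z : ℕ} {cs : List ℕ} :
    StrongParkingSeq (List.replicate n 1) cs z ↔ IsParkingSeq (List.replicate n 1) cs z :=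
  ⟨fun h => h _ (List.Perm.refl _), fun h ys hys => by rwa [List.perm_replicate.1 hys]⟩

theorem stmt19 (n k z : ℕ) (hk1 : 1 ≤ k) (hkn : k ≤ n) (hz : 0 < z) :
    {cs : List ℕ | ∀ ys : List ℕ, ys.length = k → (∀ y ∈ ys, 1 ≤ y) → ys.sum = n →
        StrongParkingSeq ys cs z} =
      {cs : List ℕ | StrongParkingSeq (List.replicate (k - 1) 1 ++ [n - k + 1]) cs z} ∧
    (k < n → {cs : List ℕ |
        StrongParkingSeq (List.replicate (k - 1) 1 ++ [n - k + 1]) cs z}.ncard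
        = ∏ i ∈ Finset.range k, (z + i)) ∧
    (k = n → {cs : List ℕ |
        StrongParkingSeq (List.replicate (k - 1) 1 ++ [n - k + 1]) cs z}.ncard
        = z * (n + z) ^ (n - 1)) := by
  have hlen : (List.replicate (k - 1) 1 ++ [n - k + 1]).length = k := by simp; omega
  have hpos : ∀ y ∈ List.replicate (k - 1) 1 ++ [n - k + 1], 1 ≤ y := by simp; omega
  have hsum : (List.replicate (k - 1) 1 ++ [n - k + 1]).sum = n := by simp; omega
  have hunits (hk : k = n) : List.replicate (k - 1) 1 ++ [n - k + 1] = List.replicate n 1 := by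
    subst hk
    rw [Nat.sub_self, ← List.replicate_succ', Nat.sub_add_cancel hk1]
  refine ⟨Set.ext fun cs => ⟨fun h => h _ hlen hpos hsum, fun h ys hys_len hys_pos hys_sum => ?_⟩,
    fun hlt => ?_, fun hk => ?_⟩
  · rcases hkn.lt_or_eq with hlt | rfl
    · obtain ⟨hcs_len, hcs⟩ := (strongParkingSeq_iff_belowStaircase (by omega) hz).1 h
      exact strongParkingSeq_of_belowStaircase hz (by omega) hys_pos hcs
    · rw [eq_replicate_one_of_sum_eq_length hys_pos (by omega), hys_len, ← hunits rfl]
      exact h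
  · simp_rw [strongParkingSeq_iff_belowStaircase (show 2 ≤ n - k + 1 by omega) hz,
      Nat.sub_add_cancel hk1]
    exact ncard_belowStaircase k z
  · simp_rw [hunits hk, strongParkingSeq_replicate_one_iff]
    exact ncard_isParkingSeq_replicate_one (by omega) hz
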